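/- Let m ≥ 3 be odd. Then the graph Γ₁₂(m,1,2), defined as the graph on vertex set (ℤ_m × {a,b}) ∪ (ℤ_{2m} × {u,v}) where a_i ~ u_i, a_i ~ u_{i+m}, a_i ~ b_{i+2}, b_i ~ v_i, b_i ~ v_{i+m}, u_i ~ v_i, u_i ~ v_{i+1} (indices of a,b mod m; of u,v mod 2m), is isomorphic to SDW(m,3), via the explicit map φ with φ(i,0,0)=b_{i+1}, φ(i,0,1)=a_i, φ(i,1,0)=u_{i+m} or u_i according as i is even or odd, φ(i,1,1)=v_{i+1} or v_{i+m+1}, φ(i,2,0)=u_i or u_{i+m}, φ(i,2,1)=v_{i+m+1} or v_{i+1} (according to parity of i). -/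
import Mathlib


/-- The graph SDW(m,3): vertex set ℤ_m × ℤ_3 × ℤ_2, with (x,i,0) ~ (x,i±1,1)
and (x,i,1) ~ (x+1,i,0). -/
def SDW (m : ℕ) : SimpleGraph (ZMod m × ZMod 3 × ZMod 2) :=
  SimpleGraph.fromRel (fun p q =>
    (p.2.2 = 0 ∧ q.2.2 = 1 ∧ q.1 = p.1 ∧ (q.2.1 = p.2.1 + 1 ∨ q.2.1 = p.2.1 - 1)) ∨
    (p.2.2 = 1 ∧ q.2.2 = 0 ∧ q.2.1 = p.2.1 ∧ q.1 = p.1 + 1))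

/-- Vertices of Γ₁₂(m,1,2): a_i = inl (i,false), b_i = inl (i,true) for i ∈ ℤ_m;
u_j = inr (j,false), v_j = inr (j,true) for j ∈ ℤ_{2m}. -/
abbrev V12 (m : ℕ) := (ZMod m × Bool) ⊕ (ZMod (2 * m) × Bool)

/-- The adjacencies of Γ₁₂(m,1,2): a_i ~ u_i, a_i ~ u_{i+m} (i.e. a_i ~ u_j iff
j ≡ i mod m), a_i ~ b_{i+2}, b_i ~ v_i, b_i ~ v_{i+m}, u_j ~ v_j, u_j ~ v_{j+1}. -/
def Gamma12Rel (m : ℕ) : V12 m → V12 m → Prop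
  | Sum.inl (i, false), Sum.inl (j, true) => j = i + 2
  | Sum.inl (i, false), Sum.inr (j, false) => ZMod.castHom (dvd_mul_left m 2) (ZMod m) j = i
  | Sum.inl (i, true), Sum.inr (j, true) => ZMod.castHom (dvd_mul_left m 2) (ZMod m) j = i
  | Sum.inr (j, false), Sum.inr (k, true) => k = j ∨ k = j + 1
  | _, _ => False

/-- The graph Γ₁₂(m,1,2). -/
def Gamma12 (m : ℕ) : SimpleGraph (V12 m) := SimpleGraph.fromRel (Gamma12Rel m)

/-- The explicit map φ from the vertices of SDW(m,3) to those of Γ₁₂(m,1,2). -/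
def phi (m : ℕ) (p : ZMod m × ZMod 3 × ZMod 2) : V12 m :=
  let i : ℕ := p.1.val
  if p.2.1 = 0 then
    if p.2.2 = 0 then Sum.inl (p.1 + 1, true)                -- φ(i,0,0) = b_{i+1}
    else Sum.inl (p.1, false)                                -- φ(i,0,1) = a_i
  else if p.2.1 = 1 then
    if p.2.2 = 0 then
      if Even i then Sum.inr (((i : ZMod (2 * m)) + m), false)      -- u_{i+m}
      else Sum.inr ((i : ZMod (2 * m)), false)                      -- u_i
    else
      if Even i then Sum.inr (((i : ZMod (2 * m)) + 1), true)       -- v_{i+1}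
      else Sum.inr (((i : ZMod (2 * m)) + m + 1), true)             -- v_{i+m+1}
  else
    if p.2.2 = 0 then
      if Even i then Sum.inr ((i : ZMod (2 * m)), false)            -- u_i
      else Sum.inr (((i : ZMod (2 * m)) + m), false)                -- u_{i+m}
    else
      if Even i then Sum.inr (((i : ZMod (2 * m)) + m + 1), true)   -- v_{i+m+1}
      else Sum.inr (((i : ZMod (2 * m)) + 1), true)                 -- v_{i+1}

/-- Explicit inverse of `phi`. -/
def psi12 (m : ℕ) : V12 m → ZMod m × ZMod 3 × ZMod 2
  | Sum.inl (i, false) => (i, 0, 1)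
  | Sum.inl (i, true) => (i - 1, 0, 0)
  | Sum.inr (j, false) =>
      (ZMod.castHom (dvd_mul_left m 2) (ZMod m) j, if Even j.val then 2 else 1, 0)
  | Sum.inr (j, true) =>
      (ZMod.castHom (dvd_mul_left m 2) (ZMod m) (j - 1), if Even (j - 1).val then 1 else 2, 1)

set_option maxHeartbeats 4000000 in
/-- For odd m ≥ 3, the graph Γ₁₂(m,1,2) is isomorphic to
SDW(m,3), via the explicit map φ. -/
theorem stmt_18 (m : ℕ) (hm : 3 ≤ m) (hodd : Odd m) :
    ∃ e : SDW m ≃g Gamma12 m, ∀ p : ZMod m × ZMod 3 × ZMod 2, e p = phi m p := by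
  haveI : NeZero m := ⟨by omega⟩
  haveI : NeZero (2 * m) := ⟨by omega⟩
  have hm2 : m % 2 = 1 := Nat.odd_iff.mp hodd
  have hmodd : ¬ Even m := by simp [Nat.even_iff, hm2]
  have hcop : Nat.Coprime 2 m := (Nat.prime_two.coprime_iff_not_dvd).mpr (fun h => by omega)
  have hvm' : ∀ z : ZMod m, ((z.val : ℕ) : ZMod m) = z := fun z => by
    simp [ZMod.natCast_val, ZMod.cast_id]
  have hcv : ∀ z : ZMod m, (ZMod.cast z : ZMod (2 * m)) = ((z.val : ℕ) : ZMod (2 * m)) := fun z => by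
    rw [← ZMod.natCast_val]
  have heq : ∀ a b : ZMod (2 * m), a = b ↔
      (ZMod.castHom (dvd_mul_right 2 m) (ZMod 2) a = ZMod.castHom (dvd_mul_right 2 m) (ZMod 2) b ∧
       ZMod.castHom (dvd_mul_left m 2) (ZMod m) a = ZMod.castHom (dvd_mul_left m 2) (ZMod m) b) := by
    intro a b
    constructor
    · rintro rfl; exact ⟨rfl, rfl⟩
    · rintro ⟨h2, hmm⟩
      have key : ∀ c : ZMod (2 * m),
          ZMod.castHom (dvd_mul_right 2 m) (ZMod 2) c = 0 →
          ZMod.castHom (dvd_mul_left m 2) (ZMod m) c = 0 → c = 0 := by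
        intro c hc2 hcm
        have hc : c = ((c.val : ℕ) : ZMod (2 * m)) := by
          rw [ZMod.natCast_val, ZMod.cast_id]
        rw [hc, map_natCast, ZMod.natCast_eq_zero_iff] at hc2 hcm
        rw [hc, ZMod.natCast_eq_zero_iff]
        exact hcop.mul_dvd_of_dvd_of_dvd hc2 hcm
      have := key (a - b) (by rw [map_sub, h2, sub_self]) (by rw [map_sub, hmm, sub_self])
      exact sub_eq_zero.mp this
  have hfmc : ∀ z : ZMod m, ZMod.castHom (dvd_mul_left m 2) (ZMod m) (ZMod.cast z : ZMod (2 * m)) = z := by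
    intro z; rw [hcv, map_natCast]; exact hvm' z
  have hf2c : ∀ z : ZMod m, ZMod.castHom (dvd_mul_right 2 m) (ZMod 2) (ZMod.cast z : ZMod (2 * m)) =
      if Even z.val then 0 else 1 := by
    intro z; rw [hcv, map_natCast]
    rcases Nat.even_or_odd z.val with h | h
    · rw [if_pos h]
      exact (ZMod.natCast_eq_zero_iff _ _).mpr h.two_dvd
    · rw [if_neg (by simpa using Nat.not_even_iff_odd.mpr h)]
      obtain ⟨k, hk⟩ := h
      rw [hk]; push_cast
      rw [show ((2 : ZMod 2)) = 0 by decide]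
      ring
  have hfm_m : ((m : ℕ) : ZMod m) = 0 := ZMod.natCast_self m
  have hf2_m : ((m : ℕ) : ZMod 2) = 1 := by
    obtain ⟨k, hk⟩ := hodd
    rw [hk]; push_cast
    rw [show ((2 : ZMod 2)) = 0 by decide]
    ring
  have hs3 : ∀ s : ZMod 3, s = 0 ∨ s = 1 ∨ s = 2 := by decide
  have hs2 : ∀ t : ZMod 2, t = 0 ∨ t = 1 := by decide
  -- left inverse, hence injectivity
  have hvi : ∀ z : ZMod m, (ZMod.cast z : ZMod (2 * m)).val = z.val := fun z => by
    rw [hcv]; exact ZMod.val_cast_of_lt (by have := ZMod.val_lt z; omega)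
  have hvim : ∀ z : ZMod m, ((ZMod.cast z : ZMod (2 * m)) + (m : ZMod (2 * m))).val = z.val + m := fun z => by
    rw [hcv, ← Nat.cast_add]
    exact ZMod.val_cast_of_lt (by have := ZMod.val_lt z; omega)
  have hEvim : ∀ z : ZMod m, Even ((ZMod.cast z : ZMod (2 * m)) + (m : ZMod (2 * m))).val ↔ ¬ Even z.val := by
    intro z; rw [hvim, Nat.even_add]; simp [hmodd]
  have hEvi : ∀ z : ZMod m, Even (ZMod.cast z : ZMod (2 * m)).val ↔ Even z.val := by
    intro z; rw [hvi]
  have hOvim : ∀ z : ZMod m, Odd ((ZMod.cast z : ZMod (2 * m)) + (m : ZMod (2 * m))).val ↔ Even z.val := by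
    intro z; rw [← Nat.not_even_iff_odd, hEvim, not_not]
  have hOvi : ∀ z : ZMod m, Odd (ZMod.cast z : ZMod (2 * m)).val ↔ ¬ Even z.val := by
    intro z; rw [← Nat.not_even_iff_odd, hEvi]
  have hleft : Function.LeftInverse (psi12 m) (phi m) := by
    rintro ⟨x, s, t⟩
    rcases hs3 s with rfl | rfl | rfl <;> rcases hs2 t with rfl | rfl <;>
      by_cases hx : Even x.val <;>
      simp (config := { decide := true }) [phi, psi12, hx, hvm', hEvim, hEvi, hOvim, hOvi, hfmc,
        map_add, map_natCast, map_one, ZMod.natCast_self,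
        add_sub_cancel_right, hmodd]
  have hinj : Function.Injective (phi m) := hleft.injective
  have hcard : Fintype.card (ZMod m × ZMod 3 × ZMod 2) = Fintype.card (V12 m) := by
    simp only [V12, Fintype.card_prod, Fintype.card_sum, ZMod.card, Fintype.card_bool]
    omega
  have hbij : Function.Bijective (phi m) :=
    (Fintype.bijective_iff_injective_and_card _).mpr ⟨hinj, hcard⟩
  -- adjacency preservation
  have e1 : (1 : ZMod 3) ≠ 0 := by decide
  have e2 : (2 : ZMod 3) ≠ 0 := by decide
  have e3 : (2 : ZMod 3) ≠ 1 := by decide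
  have e4 : (0 : ZMod 3) ≠ 1 := by decide
  have e5 : (0 : ZMod 3) ≠ 2 := by decide
  have e6 : (1 : ZMod 3) ≠ 2 := by decide
  have a1 : (1 : ZMod 3) + 1 = 2 := by decide
  have a2 : (2 : ZMod 3) + 1 = 0 := by decide
  have a3 : (0 : ZMod 3) - 1 = 2 := by decide
  have a4 : (1 : ZMod 3) - 1 = 0 := by decide
  have a5 : (2 : ZMod 3) - 1 = 1 := by decide
  have b1 : (0 : ZMod 2) ≠ 1 := by decide
  have b2 : (1 : ZMod 2) ≠ 0 := by decide
  have b3 : (1 : ZMod 2) + 1 = 0 := by decide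
  have hrel : ∀ p q : ZMod m × ZMod 3 × ZMod 2,
      (Gamma12Rel m (phi m p) (phi m q) ∨ Gamma12Rel m (phi m q) (phi m p)) ↔
      (((p.2.2 = 0 ∧ q.2.2 = 1 ∧ q.1 = p.1 ∧ (q.2.1 = p.2.1 + 1 ∨ q.2.1 = p.2.1 - 1)) ∨
       (p.2.2 = 1 ∧ q.2.2 = 0 ∧ q.2.1 = p.2.1 ∧ q.1 = p.1 + 1)) ∨
      ((q.2.2 = 0 ∧ p.2.2 = 1 ∧ p.1 = q.1 ∧ (p.2.1 = q.2.1 + 1 ∨ p.2.1 = q.2.1 - 1)) ∨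
       (q.2.2 = 1 ∧ p.2.2 = 0 ∧ p.2.1 = q.2.1 ∧ p.1 = q.1 + 1))) := by
    rintro ⟨x, s, t⟩ ⟨y, s', t'⟩
    rcases hs3 s with rfl | rfl | rfl <;> rcases hs3 s' with rfl | rfl | rfl <;>
      rcases hs2 t with rfl | rfl <;> rcases hs2 t' with rfl | rfl <;>
      by_cases hx : Even x.val <;> by_cases hy : Even y.val <;>
      simp [phi, Gamma12Rel, heq, hx, hy,
        map_add, map_natCast, map_one, hfmc, hf2c, hfm_m, hf2_m, hvm',
        e1, e2, e3, e4, e5, e6, a1, a2, a3, a4, a5, b1, b2, b3] <;>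
      first
        | rfl
        | tauto
        | (constructor <;> intro h <;> first | linear_combination h | linear_combination -h)
  refine ⟨⟨Equiv.ofBijective _ hbij, ?_⟩, fun p => rfl⟩
  intro a b
  show (Gamma12 m).Adj (phi m a) (phi m b) ↔ (SDW m).Adj a b
  simp only [Gamma12, SDW, SimpleGraph.fromRel_adj]
  exact and_congr hinj.ne_iff (hrel a b)
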